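/- arXiv:1906.07836 — 6 statements merged into one kernel-verified Lean document; each statement's English description precedes it below -/
import Mathlib

section
/- Let σ_1, …, σ_n ≥ 1 and τ_1, …, τ_p ≥ 1 be real numbers; set q = σ_1 + ⋯ + σ_n and Q = q + τ_1 + ⋯ + τ_p. For λ > 0 define the dilations δ_λ(x) = (λ^{σ_1} x_1, …, λ^{σ_n} x_n) on ℝⁿ, E_λ(η) = (λ^{τ_1} η_1, …, λ^{τ_p} η_p) on ℝ^p, and F_λ(x, y, η) = (δ_λ(x), δ_λ(y), E_λ(η)) on ℝⁿ × ℝⁿ × ℝ^p. Let Ω = {(x, y, η) ∈ ℝⁿ × ℝⁿ × ℝ^p : (x, 0) ≠ (y, η)}, let α < q − Q, and let g : Ω → ℝ be continuous with g(F_λ(w)) = λ^α g(w) for every w ∈ Ω and λ > 0. Then for every x, y ∈ ℝⁿ with x ≠ y, the map η ↦ g(x, y, η) is Lebesgue integrable on ℝ^p. -/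
open MeasureTheory

/-- Step (I)-(i) in the proof of Lemma 4.3: if `g` is continuous on
`Ω = {(x,y,η) : (x,0) ≠ (y,η)}` and `F_λ`-homogeneous of degree `α < q − Q`,
then `η ↦ g(x,y,η)` is Lebesgue integrable on `ℝ^p` for every `x ≠ y`. -/
theorem stmt6 (n p : ℕ) (σ : Fin n → ℝ) (τ : Fin p → ℝ)
    (hσ : ∀ i, 1 ≤ σ i) (hτ : ∀ j, 1 ≤ τ j)
    (α : ℝ) (hα : α < (∑ i, σ i) - ((∑ i, σ i) + ∑ j, τ j))
    (g : (Fin n → ℝ) × (Fin n → ℝ) × (Fin p → ℝ) → ℝ)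
    (hg : ContinuousOn g
      {w : (Fin n → ℝ) × (Fin n → ℝ) × (Fin p → ℝ) |
        ((w.1, (0 : Fin p → ℝ)) : (Fin n → ℝ) × (Fin p → ℝ)) ≠ (w.2.1, w.2.2)})
    (hhom : ∀ w ∈
      {w : (Fin n → ℝ) × (Fin n → ℝ) × (Fin p → ℝ) |
        ((w.1, (0 : Fin p → ℝ)) : (Fin n → ℝ) × (Fin p → ℝ)) ≠ (w.2.1, w.2.2)},
      ∀ l : ℝ, 0 < l →
        g (fun i => l ^ (σ i) * w.1 i,
            fun i => l ^ (σ i) * w.2.1 i,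
            fun j => l ^ (τ j) * w.2.2 j) = l ^ α * g w)
    (x y : Fin n → ℝ) (hxy : x ≠ y) :
    Integrable (fun η : Fin p → ℝ => g (x, y, η)) := by
  set Ω : Set ((Fin n → ℝ) × (Fin n → ℝ) × (Fin p → ℝ)) :=
    {w | ((w.1, (0 : Fin p → ℝ)) : (Fin n → ℝ) × (Fin p → ℝ)) ≠ (w.2.1, w.2.2)} with hΩdef
  have hΩopen : IsOpen Ω := by
    have : Ω = (fun w : (Fin n → ℝ) × (Fin n → ℝ) × (Fin p → ℝ) =>
        (((w.1, (0 : Fin p → ℝ)) : (Fin n → ℝ) × (Fin p → ℝ)), ((w.2.1, w.2.2) :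
          (Fin n → ℝ) × (Fin p → ℝ)))) ⁻¹' (Set.diagonal ((Fin n → ℝ) × (Fin p → ℝ)))ᶜ := by
      ext w; simp [Set.diagonal, hΩdef]
    rw [this]
    exact isClosed_diagonal.isOpen_compl.preimage (by fun_prop)
  have hmemΩ : ∀ η : Fin p → ℝ, ((x, y, η) : (Fin n → ℝ) × (Fin n → ℝ) × (Fin p → ℝ)) ∈ Ω :=
    fun η h => hxy (congrArg Prod.fst h)
  have hfc : Continuous fun η : Fin p → ℝ => g (x, y, η) := by
    have hmap : Continuous (fun η : Fin p → ℝ =>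
        ((x, y, η) : (Fin n → ℝ) × (Fin n → ℝ) × (Fin p → ℝ))) := by fun_prop
    exact ContinuousOn.comp_continuous hg hmap hmemΩ
  rcases isEmpty_or_nonempty (Fin p) with hE | hNE
  · have hμ : (volume : Measure (Fin p → ℝ)) Set.univ = 1 := by
      simp [volume_pi, Measure.pi_univ]
    haveI : IsFiniteMeasure (volume : Measure (Fin p → ℝ)) :=
      ⟨by rw [hμ]; exact ENNReal.one_lt_top⟩
    have heq : (fun η : Fin p → ℝ => g (x, y, η)) = fun _ => g (x, y, 0) := by
      funext η
      exact congrArg (fun z => g (x, y, z)) (Subsingleton.elim η 0)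
    rw [heq]
    exact integrable_const _
  -- main case
  have hτpos : ∀ j, (0:ℝ) < τ j := fun j => lt_of_lt_of_le one_pos (hτ j)
  have hτne : ∀ j, τ j ≠ 0 := fun j => (hτpos j).ne'
  set T : ℝ := ∑ j, τ j with hT
  have hTpos : 0 < T := by
    have h1 : (1:ℝ) ≤ τ (Classical.arbitrary _) := hτ _
    have h2 : τ (Classical.arbitrary (Fin p)) ≤ T :=
      Finset.single_le_sum (fun j _ => le_trans zero_le_one (hτ j)) (Finset.mem_univ _)
    linarith
  have hαT : α < -T := by rw [hT]; linarith
  set β : ℝ := α / T with hβ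
  have hβlt : β < -1 := by
    rw [hβ, div_lt_iff₀ hTpos]; linarith
  have hβneg : β ≤ 0 := by linarith
  have hTβ : T * β = α := by rw [hβ]; field_simp
  -- compact sets and bounds
  set K0 : Set ((Fin n → ℝ) × (Fin n → ℝ) × (Fin p → ℝ)) :=
    {x} ×ˢ ({y} ×ˢ Metric.closedBall (0 : Fin p → ℝ) 1) with hK0def
  have hK0c : IsCompact K0 :=
    isCompact_singleton.prod (isCompact_singleton.prod (isCompact_closedBall _ _))
  have hK0Ω : K0 ⊆ Ω := by
    rintro ⟨u, v, ζ⟩ ⟨hu, hv, hζ⟩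
    simp only [Set.mem_singleton_iff] at hu hv
    subst hu; subst hv
    exact hmemΩ ζ
  obtain ⟨C0, hC0⟩ := hK0c.exists_bound_of_continuousOn (hg.mono hK0Ω)
  set K1 : Set ((Fin n → ℝ) × (Fin n → ℝ) × (Fin p → ℝ)) :=
    (Set.univ.pi fun i => Set.Icc (-|x i|) (|x i|)) ×ˢ
      ((Set.univ.pi fun i => Set.Icc (-|y i|) (|y i|)) ×ˢ
        Metric.sphere (0 : Fin p → ℝ) 1) with hK1def
  have hK1c : IsCompact K1 :=
    (isCompact_univ_pi fun i => isCompact_Icc).prod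
      ((isCompact_univ_pi fun i => isCompact_Icc).prod (isCompact_sphere _ _))
  have hK1Ω : K1 ⊆ Ω := by
    rintro ⟨u, v, ζ⟩ ⟨hu, hv, hζ⟩
    intro h
    have h2 : (0 : Fin p → ℝ) = ζ := congrArg Prod.snd h
    rw [mem_sphere_zero_iff_norm, ← h2] at hζ
    simp at hζ
  obtain ⟨C1, hC1⟩ := hK1c.exists_bound_of_continuousOn (hg.mono hK1Ω)
  set C : ℝ := max 0 (max C0 C1) with hC
  have hCnn : 0 ≤ C := le_max_left _ _
  have hC0C : C0 ≤ C := le_trans (le_max_left _ _) (le_max_right _ _)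
  have hC1C : C1 ≤ C := le_trans (le_max_right _ _) (le_max_right _ _)
  set c : ℝ := ((2:ℝ) ^ β) ^ p with hc
  have hcpos : 0 < c := pow_pos (Real.rpow_pos_of_pos two_pos β) p
  -- pointwise bound
  have hbd : ∀ η : Fin p → ℝ, ‖g (x, y, η)‖ ≤ (C / c) * ∏ j, (1 + |η j|) ^ β := by
    intro η
    have main : ∃ X : ℝ, 0 ≤ X ∧ ‖g (x, y, η)‖ ≤ C * X ∧
        c * X ≤ ∏ j, (1 + |η j|) ^ β := by
      by_cases hcase : ∀ j, |η j| ≤ 1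
      · refine ⟨1, zero_le_one, ?_, ?_⟩
        · have hmem : ((x, y, η) : (Fin n → ℝ) × (Fin n → ℝ) × (Fin p → ℝ)) ∈ K0 := by
            refine ⟨rfl, rfl, ?_⟩
            rw [mem_closedBall_zero_iff, pi_norm_le_iff_of_nonneg zero_le_one]
            intro j; rw [Real.norm_eq_abs]; exact hcase j
          rw [mul_one]
          exact le_trans (hC0 _ hmem) hC0C
        · rw [mul_one]
          calc c = ∏ _j : Fin p, (2:ℝ) ^ β := by
                rw [Finset.prod_const, Finset.card_univ, Fintype.card_fin]
            _ ≤ ∏ j, (1 + |η j|) ^ β := by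
                refine Finset.prod_le_prod (fun j _ => Real.rpow_nonneg (by norm_num) _)
                  (fun j _ => ?_)
                exact Real.rpow_le_rpow_of_nonpos (by positivity) (by linarith [hcase j]) hβneg
      · push_neg at hcase
        obtain ⟨j1, hj1⟩ := hcase
        set r : ℝ := Finset.univ.sup' Finset.univ_nonempty (fun j => |η j| ^ (τ j)⁻¹) with hr
        have hr1 : 1 < r := by
          have h1 : (1:ℝ) < |η j1| ^ (τ j1)⁻¹ :=
            (Real.one_lt_rpow_iff_of_pos (by linarith)).mpr
              (Or.inl ⟨hj1, inv_pos.mpr (hτpos j1)⟩)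
          exact lt_of_lt_of_le h1 (Finset.le_sup' (fun j => |η j| ^ (τ j)⁻¹) (Finset.mem_univ j1))
        have hr0 : 0 < r := by linarith
        have hηle : ∀ j, |η j| ≤ r ^ (τ j) := by
          intro j
          have h := Finset.le_sup' (fun j => |η j| ^ (τ j)⁻¹) (Finset.mem_univ j)
          have h2 := Real.rpow_le_rpow (Real.rpow_nonneg (abs_nonneg _) _) h (hτpos j).le
          rwa [Real.rpow_inv_rpow (abs_nonneg _) (hτne j)] at h2
        have hone_le : ∀ j, (1:ℝ) ≤ r ^ (τ j) := fun j =>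
          Real.one_le_rpow hr1.le (hτpos j).le
        have hrinv1 : r⁻¹ ≤ 1 := by
          rw [inv_eq_one_div]; exact div_le_one_of_le₀ hr1.le hr0.le
        have hrinv0 : (0:ℝ) ≤ r⁻¹ := inv_nonneg.mpr hr0.le
        -- the rescaled point lies in K1
        have hPmem : ((fun i => r⁻¹ ^ (σ i) * x i, fun i => r⁻¹ ^ (σ i) * y i,
            fun j => r⁻¹ ^ (τ j) * η j) :
            (Fin n → ℝ) × (Fin n → ℝ) × (Fin p → ℝ)) ∈ K1 := by
          have hsc : ∀ (z : Fin n → ℝ) i, r⁻¹ ^ (σ i) * z i ∈ Set.Icc (-|z i|) (|z i|) := by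
            intro z i
            rw [Set.mem_Icc, ← abs_le, abs_mul, abs_of_nonneg (Real.rpow_nonneg hrinv0 _)]
            calc r⁻¹ ^ σ i * |z i| ≤ 1 * |z i| :=
                  mul_le_mul_of_nonneg_right
                    (Real.rpow_le_one hrinv0 hrinv1 (le_trans zero_le_one (hσ i)))
                    (abs_nonneg _)
              _ = |z i| := one_mul _
          refine ⟨fun i _ => hsc x i, fun i _ => hsc y i, ?_⟩
          rw [mem_sphere_zero_iff_norm]
          have hle : ∀ j, ‖r⁻¹ ^ (τ j) * η j‖ ≤ 1 := by
            intro j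
            rw [Real.norm_eq_abs, abs_mul, abs_of_nonneg (Real.rpow_nonneg hrinv0 _)]
            calc r⁻¹ ^ τ j * |η j| ≤ r⁻¹ ^ τ j * r ^ τ j :=
                  mul_le_mul_of_nonneg_left (hηle j) (Real.rpow_nonneg hrinv0 _)
              _ = (r⁻¹ * r) ^ τ j := (Real.mul_rpow hrinv0 hr0.le).symm
              _ = 1 := by rw [inv_mul_cancel₀ hr0.ne', Real.one_rpow]
          refine le_antisymm ((pi_norm_le_iff_of_nonneg zero_le_one).mpr hle) ?_
          obtain ⟨j0, -, hj0⟩ :=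
            Finset.exists_mem_eq_sup' (Finset.univ_nonempty) (fun j => |η j| ^ (τ j)⁻¹)
          rw [← hr] at hj0
          have hval : ‖r⁻¹ ^ (τ j0) * η j0‖ = 1 := by
            rw [Real.norm_eq_abs, abs_mul, abs_of_nonneg (Real.rpow_nonneg hrinv0 _)]
            have hη0 : |η j0| = r ^ (τ j0) := by
              rw [hj0]
              exact (Real.rpow_inv_rpow (abs_nonneg _) (hτne j0)).symm
            rw [hη0, ← Real.mul_rpow hrinv0 hr0.le, inv_mul_cancel₀ hr0.ne', Real.one_rpow]
          calc (1:ℝ) = ‖r⁻¹ ^ (τ j0) * η j0‖ := hval.symm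
            _ ≤ _ := norm_le_pi_norm (fun j => r⁻¹ ^ (τ j) * η j) j0
        have key := hhom (x, y, η) (hmemΩ η) r⁻¹ (inv_pos.mpr hr0)
        have hrα : (0:ℝ) < r ^ α := Real.rpow_pos_of_pos hr0 α
        have hgw : g (x, y, η) = r ^ α *
            g (fun i => r⁻¹ ^ (σ i) * x i, fun i => r⁻¹ ^ (σ i) * y i,
              fun j => r⁻¹ ^ (τ j) * η j) := by
          rw [key, Real.inv_rpow hr0.le, ← mul_assoc, mul_inv_cancel₀ hrα.ne', one_mul]
        refine ⟨r ^ α, hrα.le, ?_, ?_⟩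
        · rw [hgw, norm_mul, Real.norm_eq_abs (r ^ α), abs_of_nonneg hrα.le, mul_comm (C) _]
          exact mul_le_mul_of_nonneg_left (le_trans (hC1 _ hPmem) hC1C) hrα.le
        · calc c * r ^ α = ∏ j : Fin p, ((2:ℝ) ^ β * (r ^ (τ j)) ^ β) := by
                rw [Finset.prod_mul_distrib, Finset.prod_const, Finset.card_univ,
                  Fintype.card_fin]
                congr 1
                have : ∀ j : Fin p, (r ^ (τ j)) ^ β = r ^ (τ j * β) := fun j =>
                  (Real.rpow_mul hr0.le _ _).symm
                simp_rw [this]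
                rw [← Real.rpow_sum_of_pos hr0, ← Finset.sum_mul, ← hT, hTβ]
            _ ≤ ∏ j, (1 + |η j|) ^ β := by
                refine Finset.prod_le_prod
                  (fun j _ => mul_nonneg (Real.rpow_nonneg (by norm_num) _)
                    (Real.rpow_nonneg (Real.rpow_nonneg hr0.le _) _))
                  (fun j _ => ?_)
                rw [← Real.mul_rpow (by norm_num) (Real.rpow_nonneg hr0.le _)]
                refine Real.rpow_le_rpow_of_nonpos (by positivity) ?_ hβneg
                have := hηle j
                have := hone_le j
                linarith
    obtain ⟨X, hX0, h1, h2⟩ := main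
    calc ‖g (x, y, η)‖ ≤ C * X := h1
      _ = (C / c) * (c * X) := by field_simp
      _ ≤ (C / c) * ∏ j, (1 + |η j|) ^ β :=
          mul_le_mul_of_nonneg_left h2 (div_nonneg hCnn hcpos.le)
  -- integrable bound
  have hint : Integrable fun η : Fin p → ℝ => ∏ j, (1 + |η j|) ^ β := by
    have h1d : Integrable (fun t : ℝ => (1 + |t|) ^ β) := by
      have := integrable_one_add_norm (E := ℝ) (μ := volume) (r := -β)
        (by simp only [Module.finrank_self, Nat.cast_one]; linarith)
      simpa [Real.norm_eq_abs] using this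
    exact Integrable.fintype_prod (f := fun (_ : Fin p) (t : ℝ) => (1 + |t|) ^ β) fun _ => h1d
  exact (hint.const_mul (C / c)).mono' hfc.aestronglyMeasurable (ae_of_all _ hbd)
end

section
/- Let σ_1, …, σ_n ≥ 1 and τ_1, …, τ_p ≥ 1 be real numbers; set q = σ_1 + ⋯ + σ_n and Q = q + τ_1 + ⋯ + τ_p. With the dilations δ_λ on ℝⁿ, E_λ on ℝ^p and F_λ(x,y,η) = (δ_λ(x), δ_λ(y), E_λ(η)) on ℝⁿ × ℝⁿ × ℝ^p, let Ω = {(x, y, η) : (x, 0) ≠ (y, η)}, let α < q − Q, and let g : Ω → ℝ be continuously differentiable with g(F_λ(w)) = λ^α g(w) for every w ∈ Ω and λ > 0. Define h(x, y) := ∫_{ℝ^p} g(x, y, η) dη for x ≠ y in ℝⁿ. Then for every x ≠ y and every coordinate index i of the (x,y)-variables in ℝⁿ × ℝⁿ, the function η ↦ (∂g/∂w_i)(x, y, η) is integrable on ℝ^p, the partial derivative ∂h/∂w_i exists at (x, y), and ∂h/∂w_i(x, y) = ∫_{ℝ^p} (∂g/∂w_i)(x, y, η) dη. -/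
/-!
Let `ρ(η) = max_j |η_j| ^ (1 / τ_j)` be the anisotropic gauge of `η`. Fix a compact set of
pairs `(x, y)` off the diagonal and a continuous function `φ` on `Ω` that is `F_λ`-homogeneous of
degree `β ≤ 0`. Where `ρ(η) ≤ 1`, `φ` is bounded by compactness. Where `ρ(η) > 1`, the dilation
`F_{1/ρ}` carries `(x, y, η)` into a fixed compact subset of `Ω`, because its `η`-part lies on the
unit sphere. So `|φ| ≲ ρ^β ≤ ∏_j max(1, |η_j|) ^ (β / Σ τ)`, and this bound is integrable once
`β < -Σ τ = q - Q`. The partial derivative `∂_i g` is homogeneous of degree `α - σ_i`. Hence `g`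
and `∂_i g` are both dominated along a short segment through `(x, y)`, and we can differentiate
under the integral sign.
-/

open MeasureTheory Set Metric Filter Topology

noncomputable section

variable {ι κ : Type*}

def anisoDilation (c : ι → ℝ) (l : ℝ) : (ι → ℝ) →L[ℝ] (ι → ℝ) :=
  ContinuousLinearMap.pi fun i => l ^ c i • ContinuousLinearMap.proj i

@[simp]
lemma anisoDilation_apply (c : ι → ℝ) (l : ℝ) (u : ι → ℝ) (i : ι) :
    anisoDilation c l u i = l ^ c i * u i :=
  rfl

lemma anisoDilation_inv_cancel (c : ι → ℝ) {l : ℝ} (hl : 0 < l) (u : ι → ℝ) :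
    anisoDilation c l (anisoDilation c l⁻¹ u) = u := by
  ext i
  simp [Real.inv_rpow hl.le, (Real.rpow_pos_of_pos hl (c i)).ne']

lemma anisoDilation_injective (c : ι → ℝ) {l : ℝ} (hl : 0 < l) :
    Function.Injective (anisoDilation c l) := fun u u' h => by
  rw [← anisoDilation_inv_cancel c (inv_pos.2 hl) u, ← anisoDilation_inv_cancel c (inv_pos.2 hl) u',
    inv_inv, h]

lemma anisoDilation_single [DecidableEq ι] (c : ι → ℝ) (l : ℝ) (i : ι) :
    anisoDilation c l (Pi.single i 1) = l ^ c i • Pi.single i 1 := by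
  ext k
  rcases eq_or_ne k i with rfl | hk <;> simp [*]

lemma norm_anisoDilation_le [Fintype ι] {c : ι → ℝ} (hc : ∀ i, 0 ≤ c i) {l : ℝ} (hl₀ : 0 ≤ l)
    (hl₁ : l ≤ 1) (u : ι → ℝ) : ‖anisoDilation c l u‖ ≤ ‖u‖ := by
  refine pi_norm_le_iff_of_nonneg (norm_nonneg u) |>.2 fun i => ?_
  rw [anisoDilation_apply, norm_mul, Real.norm_of_nonneg (Real.rpow_nonneg hl₀ _)]
  exact mul_le_of_le_one_left (norm_nonneg _) (Real.rpow_le_one hl₀ hl₁ (hc i))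
    |>.trans (norm_le_pi_norm u i)

def jointDilation (σ : ι → ℝ) (τ : κ → ℝ) (l : ℝ) :
    ((ι → ℝ) × (ι → ℝ) × (κ → ℝ)) →L[ℝ] ((ι → ℝ) × (ι → ℝ) × (κ → ℝ)) :=
  (anisoDilation σ l).prodMap ((anisoDilation σ l).prodMap (anisoDilation τ l))

@[simp]
lemma jointDilation_apply (σ : ι → ℝ) (τ : κ → ℝ) (l : ℝ) (w : (ι → ℝ) × (ι → ℝ) × (κ → ℝ)) :
    jointDilation σ τ l w =
      (anisoDilation σ l w.1, anisoDilation σ l w.2.1, anisoDilation τ l w.2.2) :=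
  rfl

lemma jointDilation_inv_cancel (σ : ι → ℝ) (τ : κ → ℝ) {l : ℝ} (hl : 0 < l)
    (w : (ι → ℝ) × (ι → ℝ) × (κ → ℝ)) :
    jointDilation σ τ l (jointDilation σ τ l⁻¹ w) = w := by
  simp [anisoDilation_inv_cancel _ hl]

lemma jointDilation_coordinate [DecidableEq ι] (σ : ι → ℝ) (τ : κ → ℝ)
    {v : (ι → ℝ) × (ι → ℝ)} (hv : (∃ i, v = (Pi.single i 1, 0)) ∨ (∃ i, v = (0, Pi.single i 1))) :
    ∃ i, ∀ l, jointDilation σ τ l (v.1, v.2, 0) = l ^ σ i • (v.1, v.2, 0) := by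
  rcases hv with ⟨i, rfl⟩ | ⟨i, rfl⟩ <;>
    exact ⟨i, fun l => by simp [anisoDilation_single]⟩

def Omega (ι κ : Type*) : Set ((ι → ℝ) × (ι → ℝ) × (κ → ℝ)) :=
  {w | ((w.1, (0 : κ → ℝ)) : (ι → ℝ) × (κ → ℝ)) ≠ (w.2.1, w.2.2)}

lemma mem_Omega_iff {w : (ι → ℝ) × (ι → ℝ) × (κ → ℝ)} :
    w ∈ Omega ι κ ↔ w.1 ≠ w.2.1 ∨ w.2.2 ≠ 0 := by
  simp only [Omega, mem_ofPred_eq, ne_eq, Prod.mk.injEq, not_and_or, eq_comm (a := (0 : κ → ℝ))]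

lemma isOpen_Omega : IsOpen (Omega ι κ) :=
  isOpen_ne_fun (by fun_prop) (by fun_prop)

lemma jointDilation_mem_Omega (σ : ι → ℝ) (τ : κ → ℝ) {l : ℝ} (hl : 0 < l)
    {w : (ι → ℝ) × (ι → ℝ) × (κ → ℝ)} (hw : w ∈ Omega ι κ) :
    jointDilation σ τ l w ∈ Omega ι κ := by
  rw [mem_Omega_iff] at hw ⊢
  exact hw.imp (anisoDilation_injective σ hl).ne
    (map_ne_zero_iff _ (anisoDilation_injective τ hl)).2

def IsJointlyHomogeneous (σ : ι → ℝ) (τ : κ → ℝ) (β : ℝ)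
    (φ : (ι → ℝ) × (ι → ℝ) × (κ → ℝ) → ℝ) : Prop :=
  ∀ w ∈ Omega ι κ, ∀ l : ℝ, 0 < l → φ (jointDilation σ τ l w) = l ^ β * φ w

lemma IsJointlyHomogeneous.eq_rpow_mul_inv {σ : ι → ℝ} {τ : κ → ℝ} {β : ℝ}
    {φ : (ι → ℝ) × (ι → ℝ) × (κ → ℝ) → ℝ} (hφ : IsJointlyHomogeneous σ τ β φ)
    {w : (ι → ℝ) × (ι → ℝ) × (κ → ℝ)} (hw : w ∈ Omega ι κ) {l : ℝ} (hl : 0 < l) :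
    φ w = l ^ β * φ (jointDilation σ τ l⁻¹ w) := by
  rw [← hφ _ (jointDilation_mem_Omega σ τ (inv_pos.2 hl) hw) l hl, jointDilation_inv_cancel σ τ hl]

lemma fderiv_map_apply_of_comp_eq_smul {E F : Type*} [NormedAddCommGroup E] [NormedSpace ℝ E]
    [NormedAddCommGroup F] [NormedSpace ℝ F] {U : Set E} (hU : IsOpen U) {g : E → F}
    (hg : DifferentiableOn ℝ g U) (L : E →L[ℝ] E) (hL : MapsTo L U U) (c : ℝ)
    (hgL : ∀ u ∈ U, g (L u) = c • g u) {w : E} (hw : w ∈ U) (v : E) :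
    fderiv ℝ g (L w) (L v) = c • fderiv ℝ g w v := by
  have hcomp : fderiv ℝ (g ∘ L) w = (fderiv ℝ g (L w)).comp L := by
    rw [fderiv_comp w ((hg _ (hL hw)).differentiableAt (hU.mem_nhds (hL hw))) L.differentiableAt,
      L.fderiv]
  have hsmul : fderiv ℝ (g ∘ L) w = c • fderiv ℝ g w := by
    have heq : g ∘ L =ᶠ[𝓝 w] fun u => c • g u := eventually_of_mem (hU.mem_nhds hw) hgL
    rw [heq.fderiv_eq]
    exact fderiv_const_smul ((hg w hw).differentiableAt (hU.mem_nhds hw)) c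
  simpa using congrArg (· v) (hcomp.symm.trans hsmul)

lemma IsJointlyHomogeneous.fderiv_apply [Fintype ι] [Fintype κ] {σ : ι → ℝ} {τ : κ → ℝ} {α s : ℝ}
    {g : (ι → ℝ) × (ι → ℝ) × (κ → ℝ) → ℝ} (hhom : IsJointlyHomogeneous σ τ α g)
    (hg : DifferentiableOn ℝ g (Omega ι κ)) {v : (ι → ℝ) × (ι → ℝ) × (κ → ℝ)}
    (hv : ∀ l, jointDilation σ τ l v = l ^ s • v) :
    IsJointlyHomogeneous σ τ (α - s) fun w => fderiv ℝ g w v := by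
  intro w hw l hl
  have h := fderiv_map_apply_of_comp_eq_smul isOpen_Omega hg (jointDilation σ τ l)
    (fun _ hu => jointDilation_mem_Omega σ τ hl hu) (l ^ α) (fun u hu => hhom u hu l hl) hw v
  rw [hv, map_smul, smul_eq_mul, smul_eq_mul] at h
  rw [Real.rpow_sub hl, div_mul_eq_mul_div, eq_div_iff (Real.rpow_pos_of_pos hl s).ne', ← h,
    mul_comm]

section Gauge

variable {τ : κ → ℝ}

def anisoGauge (τ η : κ → ℝ) : ℝ :=
  ⨆ j, |η j| ^ (τ j)⁻¹

lemma anisoGauge_nonneg (τ η : κ → ℝ) : 0 ≤ anisoGauge τ η :=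
  Real.iSup_nonneg fun _ => Real.rpow_nonneg (abs_nonneg _) _

lemma rpow_inv_le_anisoGauge [Fintype κ] (τ η : κ → ℝ) (j : κ) :
    |η j| ^ (τ j)⁻¹ ≤ anisoGauge τ η :=
  le_ciSup (f := fun j => |η j| ^ (τ j)⁻¹) (Set.finite_range _).bddAbove j

lemma abs_le_anisoGauge_rpow [Fintype κ] (η : κ → ℝ) {j : κ} (hτ : 0 < τ j) :
    |η j| ≤ anisoGauge τ η ^ τ j := by
  rw [← Real.rpow_inv_le_iff_of_pos (abs_nonneg _) (anisoGauge_nonneg τ η) hτ]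
  exact rpow_inv_le_anisoGauge τ η j

lemma exists_abs_eq_anisoGauge_rpow [Fintype κ] [Nonempty κ] (hτ : ∀ j, 0 < τ j) (η : κ → ℝ) :
    ∃ j, |η j| = anisoGauge τ η ^ τ j := by
  obtain ⟨j, hj⟩ := Finite.exists_max fun j : κ => |η j| ^ (τ j)⁻¹
  refine ⟨j, ?_⟩
  rw [← Real.rpow_inv_eq (abs_nonneg _) (anisoGauge_nonneg τ η) (hτ j).ne']
  exact le_antisymm (rpow_inv_le_anisoGauge τ η j) (ciSup_le hj)

lemma nonempty_of_anisoGauge_pos {η : κ → ℝ} (hη : 0 < anisoGauge τ η) : Nonempty κ := by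
  by_contra hκ
  rw [not_nonempty_iff] at hκ
  simp [anisoGauge] at hη

lemma norm_anisoDilation_inv_anisoGauge [Fintype κ] (hτ : ∀ j, 0 < τ j) {η : κ → ℝ}
    (hη : 0 < anisoGauge τ η) : ‖anisoDilation τ (anisoGauge τ η)⁻¹ η‖ = 1 := by
  set ρ := anisoGauge τ η
  have := nonempty_of_anisoGauge_pos hη
  have hcoord : ∀ j, ‖anisoDilation τ ρ⁻¹ η j‖ = |η j| / ρ ^ τ j := fun j => by
    rw [anisoDilation_apply, norm_mul, Real.inv_rpow hη.le,
      Real.norm_of_nonneg (inv_nonneg.2 (Real.rpow_nonneg hη.le _)), Real.norm_eq_abs,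
      inv_mul_eq_div]
  obtain ⟨j₀, hj₀⟩ := exists_abs_eq_anisoGauge_rpow hτ η
  refine le_antisymm ((pi_norm_le_iff_of_nonneg zero_le_one).2 fun j => ?_) ?_
  · rw [hcoord, div_le_one (Real.rpow_pos_of_pos hη _)]
    exact abs_le_anisoGauge_rpow η (hτ j)
  · calc (1 : ℝ) = ‖anisoDilation τ ρ⁻¹ η j₀‖ := by
          rw [hcoord, hj₀, div_self (Real.rpow_pos_of_pos hη _).ne']
      _ ≤ _ := norm_le_pi_norm _ j₀

lemma norm_le_one_of_anisoGauge_le_one [Fintype κ] (hτ : ∀ j, 0 < τ j) {η : κ → ℝ}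
    (hη : anisoGauge τ η ≤ 1) : ‖η‖ ≤ 1 :=
  (pi_norm_le_iff_of_nonneg zero_le_one).2 fun j =>
    (abs_le_anisoGauge_rpow η (hτ j)).trans (Real.rpow_le_one (anisoGauge_nonneg τ η) hη (hτ j).le)

lemma anisoGauge_rpow_le_prod [Fintype κ] (hτ : ∀ j, 0 < τ j) {η : κ → ℝ}
    (hη : 1 ≤ anisoGauge τ η) {β : ℝ} (hβ : β ≤ 0) :
    anisoGauge τ η ^ β ≤ ∏ j, max 1 |η j| ^ (β / ∑ j, τ j) := by
  set ρ := anisoGauge τ η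
  have := nonempty_of_anisoGauge_pos (zero_lt_one.trans_le hη)
  have hT : 0 < ∑ j, τ j := Finset.sum_pos (fun j _ => hτ j) Finset.univ_nonempty
  calc ρ ^ β = ∏ j, (ρ ^ τ j) ^ (β / ∑ j, τ j) := by
        simp_rw [← Real.rpow_mul (zero_le_one.trans hη), ← Real.rpow_sum_of_pos
          (zero_lt_one.trans_le hη), ← Finset.sum_mul, mul_div_cancel₀ _ hT.ne']
    _ ≤ ∏ j, max 1 |η j| ^ (β / ∑ j, τ j) := by
        refine Finset.prod_le_prod (fun j _ => by positivity) fun j _ => ?_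
        refine Real.rpow_le_rpow_of_nonpos (zero_lt_one.trans_le (le_max_left _ _)) ?_
          (div_nonpos_of_nonpos_of_nonneg hβ hT.le)
        exact max_le (Real.one_le_rpow hη (hτ j).le) (abs_le_anisoGauge_rpow η (hτ j))

end Gauge

lemma IsJointlyHomogeneous.exists_bound [Fintype ι] [Fintype κ] {σ : ι → ℝ} {τ : κ → ℝ} {β : ℝ}
    {φ : (ι → ℝ) × (ι → ℝ) × (κ → ℝ) → ℝ} (hhom : IsJointlyHomogeneous σ τ β φ)
    (hφ : ContinuousOn φ (Omega ι κ)) (hσ : ∀ i, 0 ≤ σ i) (hτ : ∀ j, 0 < τ j) (hβ : β ≤ 0)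
    {K : Set ((ι → ℝ) × (ι → ℝ))} (hK : IsCompact K) (hKd : ∀ z ∈ K, z.1 ≠ z.2) :
    ∃ C, ∀ z ∈ K, ∀ η, ‖φ (z.1, z.2, η)‖ ≤ C * ∏ j, max 1 |η j| ^ (β / ∑ j, τ j) := by
  obtain ⟨M, hM⟩ := hK.isBounded.subset_closedBall 0
  have hnear : IsCompact ((fun q : ((ι → ℝ) × (ι → ℝ)) × (κ → ℝ) => (q.1.1, q.1.2, q.2)) ''
      K ×ˢ closedBall 0 1) :=
    (hK.prod (isCompact_closedBall 0 1)).image (by fun_prop)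
  obtain ⟨C₀, hC₀⟩ := hnear.exists_bound_of_continuousOn <| hφ.mono <| by
    rintro _ ⟨q, ⟨hq, -⟩, rfl⟩
    exact mem_Omega_iff.2 (Or.inl (hKd _ hq))
  have hfar : IsCompact (closedBall (0 : ι → ℝ) M ×ˢ closedBall (0 : ι → ℝ) M ×ˢ
      sphere (0 : κ → ℝ) 1) :=
    (isCompact_closedBall _ _).prod ((isCompact_closedBall _ _).prod (isCompact_sphere _ _))
  obtain ⟨C₁, hC₁⟩ := hfar.exists_bound_of_continuousOn <| hφ.mono <| by
    rintro w ⟨-, -, hw⟩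
    exact mem_Omega_iff.2 (Or.inr (ne_zero_of_mem_sphere one_ne_zero ⟨w.2.2, hw⟩))
  refine ⟨max C₀ C₁, fun z hz η => ?_⟩
  set ρ := anisoGauge τ η
  rcases le_or_gt ρ 1 with hρ | hρ
  · have hη := norm_le_one_of_anisoGauge_le_one hτ hρ
    have hprod : ∏ j, max 1 |η j| ^ (β / ∑ j, τ j) = 1 :=
      Finset.prod_eq_one fun j _ => by
        rw [max_eq_left (show |η j| ≤ 1 from (norm_le_pi_norm η j).trans hη), Real.one_rpow]
    rw [hprod, mul_one]
    exact (hC₀ _ ⟨(z, η), ⟨hz, mem_closedBall_zero_iff.2 hη⟩, rfl⟩).trans (le_max_left _ _)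
  · have hρ₀ : 0 < ρ := zero_lt_one.trans hρ
    have hρ₁ : ρ⁻¹ ≤ 1 := inv_le_one_of_one_le₀ hρ.le
    have hzM : ‖z‖ ≤ M := mem_closedBall_zero_iff.1 (hM hz)
    have hw₀ : jointDilation σ τ ρ⁻¹ (z.1, z.2, η) ∈ closedBall (0 : ι → ℝ) M ×ˢ
        closedBall (0 : ι → ℝ) M ×ˢ sphere (0 : κ → ℝ) 1 := by
      refine ⟨?_, ?_, ?_⟩ <;> simp only [jointDilation_apply, mem_closedBall_zero_iff,
        mem_sphere_zero_iff_norm]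
      · exact (norm_anisoDilation_le hσ (inv_nonneg.2 hρ₀.le) hρ₁ _).trans
          ((norm_fst_le z).trans hzM)
      · exact (norm_anisoDilation_le hσ (inv_nonneg.2 hρ₀.le) hρ₁ _).trans
          ((norm_snd_le z).trans hzM)
      · exact norm_anisoDilation_inv_anisoGauge hτ hρ₀
    rw [hhom.eq_rpow_mul_inv (mem_Omega_iff.2 (Or.inl (hKd z hz))) hρ₀, norm_mul,
      Real.norm_of_nonneg (Real.rpow_nonneg hρ₀.le _), mul_comm (max C₀ C₁)]
    exact mul_le_mul (anisoGauge_rpow_le_prod hτ hρ.le hβ)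
      ((hC₁ _ hw₀).trans (le_max_right _ _)) (norm_nonneg _) (by positivity)

lemma integrable_max_one_abs_rpow {c : ℝ} (hc : c < -1) :
    Integrable fun t : ℝ => max 1 |t| ^ c := by
  have h := (integrable_one_add_norm (E := ℝ) (μ := volume) (r := -c)
    (by simp; linarith)).const_mul (2 ^ (-c))
  refine h.mono' (Measurable.aestronglyMeasurable (by fun_prop)) (ae_of_all _ fun t => ?_)
  have hmax : (1 + |t|) / 2 ≤ max 1 |t| := by
    linarith [le_max_left 1 |t|, le_max_right 1 |t|]
  rw [Real.norm_of_nonneg (by positivity), neg_neg, Real.norm_eq_abs]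
  calc max 1 |t| ^ c ≤ ((1 + |t|) / 2) ^ c :=
        Real.rpow_le_rpow_of_nonpos (by positivity) hmax (by linarith)
    _ = 2 ^ (-c) * (1 + |t|) ^ c := by
        rw [Real.div_rpow (by positivity) zero_le_two, Real.rpow_neg zero_le_two, div_eq_inv_mul]

lemma integrable_prod_max_one_abs_rpow [Fintype κ] {τ : κ → ℝ} (hτ : ∀ j, 0 < τ j) {β : ℝ}
    (hβ : β < -∑ j, τ j) : Integrable fun η : κ → ℝ => ∏ j, max 1 |η j| ^ (β / ∑ j, τ j) :=
  Integrable.fintype_prod (f := fun _ t => max 1 |t| ^ (β / ∑ j, τ j)) fun j =>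
    integrable_max_one_abs_rpow <| by
      rwa [div_lt_iff₀ (Finset.sum_pos (fun j _ => hτ j) ⟨j, Finset.mem_univ j⟩), neg_one_mul]

lemma IsJointlyHomogeneous.exists_integrable_bound [Fintype ι] [Fintype κ] {σ : ι → ℝ}
    {τ : κ → ℝ} {β : ℝ} {φ : (ι → ℝ) × (ι → ℝ) × (κ → ℝ) → ℝ}
    (hhom : IsJointlyHomogeneous σ τ β φ) (hφ : ContinuousOn φ (Omega ι κ)) (hσ : ∀ i, 0 ≤ σ i)
    (hτ : ∀ j, 0 < τ j) (hβ : β < -∑ j, τ j) {K : Set ((ι → ℝ) × (ι → ℝ))} (hK : IsCompact K)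
    (hKd : ∀ z ∈ K, z.1 ≠ z.2) :
    ∃ G : (κ → ℝ) → ℝ, Integrable G ∧ ∀ z ∈ K, ∀ η, ‖φ (z.1, z.2, η)‖ ≤ G η := by
  have hβ₀ : β ≤ 0 := hβ.le.trans (neg_nonpos.2 (Finset.sum_nonneg fun j _ => (hτ j).le))
  obtain ⟨C, hC⟩ := hhom.exists_bound hφ hσ hτ hβ₀ hK hKd
  exact ⟨_, (integrable_prod_max_one_abs_rpow hτ hβ).const_mul C, hC⟩

lemma exists_pos_forall_closedBall_add_smul_ne {E : Type*} [NormedAddCommGroup E]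
    [NormedSpace ℝ E] {x y : E} (hxy : x ≠ y) (a b : E) :
    ∃ ε > 0, ∀ t ∈ closedBall (0 : ℝ) ε, x + t • a ≠ y + t • b := by
  have hopen : IsOpen {t : ℝ | x + t • a ≠ y + t • b} := isOpen_ne_fun (by fun_prop) (by fun_prop)
  exact nhds_basis_closedBall.mem_iff.1 (hopen.mem_nhds (by simpa using hxy))

lemma hasDerivAt_comp_add_smul_prod {E F G : Type*} [NormedAddCommGroup E] [NormedSpace ℝ E]
    [NormedAddCommGroup F] [NormedSpace ℝ F] [NormedAddCommGroup G] [NormedSpace ℝ G]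
    {g : E × E × F → G} {x y a b : E} {η : F} {t : ℝ}
    (hg : DifferentiableAt ℝ g (x + t • a, y + t • b, η)) :
    HasDerivAt (fun s : ℝ => g (x + s • a, y + s • b, η))
      (fderiv ℝ g (x + t • a, y + t • b, η) (a, b, 0)) t := by
  refine hg.hasFDerivAt.comp_hasDerivAt t ?_
  simpa using (((hasDerivAt_id t).smul_const a).const_add x).prodMk
    ((((hasDerivAt_id t).smul_const b).const_add y).prodMk (hasDerivAt_const t η))

theorem IsJointlyHomogeneous.hasDerivAt_integral [Fintype ι] [Fintype κ] {σ : ι → ℝ} {τ : κ → ℝ}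
    {α s : ℝ} {g : (ι → ℝ) × (ι → ℝ) × (κ → ℝ) → ℝ} (hhom : IsJointlyHomogeneous σ τ α g)
    (hg : ContDiffOn ℝ 1 g (Omega ι κ)) (hσ : ∀ i, 0 ≤ σ i) (hτ : ∀ j, 0 < τ j)
    (hα : α < -∑ j, τ j) (hs : 0 ≤ s) {v : (ι → ℝ) × (ι → ℝ)}
    (hv : ∀ l, jointDilation σ τ l (v.1, v.2, 0) = l ^ s • (v.1, v.2, 0))
    {x y : ι → ℝ} (hxy : x ≠ y) :
    Integrable (fun η => fderiv ℝ g (x, y, η) (v.1, v.2, 0)) ∧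
      HasDerivAt (fun t : ℝ => ∫ η, g (x + t • v.1, y + t • v.2, η))
        (∫ η, fderiv ℝ g (x, y, η) (v.1, v.2, 0)) 0 := by
  obtain ⟨ε, hε, hne⟩ := exists_pos_forall_closedBall_add_smul_ne hxy v.1 v.2
  set K := (fun t : ℝ => (x + t • v.1, y + t • v.2)) '' closedBall 0 ε
  have hK : IsCompact K := (isCompact_closedBall 0 ε).image (by fun_prop)
  have hKd : ∀ z ∈ K, z.1 ≠ z.2 := by
    rintro _ ⟨t, ht, rfl⟩
    exact hne t ht
  have hKmem : ∀ t ∈ ball (0 : ℝ) ε, (x + t • v.1, y + t • v.2) ∈ K :=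
    fun t ht => mem_image_of_mem _ (ball_subset_closedBall ht)
  have hmem : ∀ t ∈ ball (0 : ℝ) ε, ∀ η, (x + t • v.1, y + t • v.2, η) ∈ Omega ι κ :=
    fun t ht η => mem_Omega_iff.2 (Or.inl (hKd _ (hKmem t ht)))
  have hg' : ContinuousOn (fun w => fderiv ℝ g w (v.1, v.2, 0)) (Omega ι κ) :=
    (hg.continuousOn_fderiv_of_isOpen isOpen_Omega le_rfl).clm_apply continuousOn_const
  obtain ⟨G, hG, hgG⟩ := hhom.exists_integrable_bound hg.continuousOn hσ hτ hα hK hKd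
  obtain ⟨G', hG', hg'G'⟩ := (hhom.fderiv_apply (hg.differentiableOn one_ne_zero) hv
    ).exists_integrable_bound hg' hσ hτ (by linarith) hK hKd
  have h0 : (0 : ℝ) ∈ ball 0 ε := mem_ball_self hε
  have h := hasDerivAt_integral_of_dominated_loc_of_deriv_le (ball_mem_nhds 0 hε)
    (F := fun t η => g (x + t • v.1, y + t • v.2, η))
    (F' := fun t η => fderiv ℝ g (x + t • v.1, y + t • v.2, η) (v.1, v.2, 0))
    (eventually_of_mem (ball_mem_nhds 0 hε) fun t ht =>
      (hg.continuousOn.comp_continuous (by fun_prop) (hmem t ht)).aestronglyMeasurable)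
    (hG.mono' (hg.continuousOn.comp_continuous (by fun_prop) (hmem 0 h0)).aestronglyMeasurable
      (ae_of_all _ (hgG _ (hKmem 0 h0))))
    (hg'.comp_continuous (by fun_prop) (hmem 0 h0)).aestronglyMeasurable
    (ae_of_all _ fun η t ht => hg'G' _ (hKmem t ht) η) hG'
    (ae_of_all _ fun η t ht => hasDerivAt_comp_add_smul_prod
      ((hg.differentiableOn one_ne_zero _ (hmem t ht η)).differentiableAt
        (isOpen_Omega.mem_nhds (hmem t ht η))))
  simpa only [zero_smul, add_zero] using h

end

/-- Step (I)-(ii) in the proof of Lemma 4.3: differentiation under the integral sign.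
If `g` is C¹ on `Ω = {(x,y,η) : (x,0) ≠ (y,η)}` and `F_λ`-homogeneous of degree
`α < q − Q`, then for `x ≠ y` and every coordinate direction `v` of the
`(x,y)`-variables, the directional derivative of `h(x,y) = ∫_{ℝ^p} g(x,y,η) dη`
exists and is obtained by differentiating under the integral sign. -/
theorem stmt7 (n p : ℕ) (σ : Fin n → ℝ) (τ : Fin p → ℝ)
    (hσ : ∀ i, 1 ≤ σ i) (hτ : ∀ j, 1 ≤ τ j)
    (α : ℝ) (hα : α < (∑ i, σ i) - ((∑ i, σ i) + ∑ j, τ j))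
    (g : (Fin n → ℝ) × (Fin n → ℝ) × (Fin p → ℝ) → ℝ)
    (hg : ContDiffOn ℝ 1 g
      {w : (Fin n → ℝ) × (Fin n → ℝ) × (Fin p → ℝ) |
        ((w.1, (0 : Fin p → ℝ)) : (Fin n → ℝ) × (Fin p → ℝ)) ≠ (w.2.1, w.2.2)})
    (hhom : ∀ w ∈
      {w : (Fin n → ℝ) × (Fin n → ℝ) × (Fin p → ℝ) |
        ((w.1, (0 : Fin p → ℝ)) : (Fin n → ℝ) × (Fin p → ℝ)) ≠ (w.2.1, w.2.2)},
      ∀ l : ℝ, 0 < l →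
        g (fun i => l ^ (σ i) * w.1 i,
            fun i => l ^ (σ i) * w.2.1 i,
            fun j => l ^ (τ j) * w.2.2 j) = l ^ α * g w)
    (x y : Fin n → ℝ) (hxy : x ≠ y)
    (v : (Fin n → ℝ) × (Fin n → ℝ))
    (hv : (∃ i, v = (Pi.single i 1, 0)) ∨ (∃ i, v = (0, Pi.single i 1))) :
    Integrable (fun η : Fin p → ℝ =>
        fderiv ℝ g (x, y, η) (v.1, v.2, (0 : Fin p → ℝ))) ∧
    HasDerivAt (fun t : ℝ => ∫ η : Fin p → ℝ, g (x + t • v.1, y + t • v.2, η))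
      (∫ η : Fin p → ℝ, fderiv ℝ g (x, y, η) (v.1, v.2, (0 : Fin p → ℝ))) 0 := by
  have hhom' : IsJointlyHomogeneous σ τ α g := hhom
  obtain ⟨i, hvi⟩ := jointDilation_coordinate σ τ hv
  exact hhom'.hasDerivAt_integral hg (fun i => zero_le_one.trans (hσ i))
    (fun j => zero_lt_one.trans_le (hτ j)) (by linarith) (zero_le_one.trans (hσ i)) hvi hxy
end

section
/- Let n, q be integers with 1 ≤ n ≤ q, let f_n, …, f_q be nonnegative real numbers not all zero, and set Λ(ρ) = Σ_{k=n}^q f_k ρ^k for ρ > 0. Let 0 < γ_1 ≤ γ_2 and let V : (0, ∞) → (0, ∞) be a measurable function with γ_1 Λ(ρ) ≤ V(ρ) ≤ γ_2 Λ(ρ) for every ρ > 0. Then for all a, b with 0 < a < b/2 one has ∫_a^b ρ / V(ρ) dρ ≥ C · a² / V(a), where C = 2^{2(1−q)} γ_1 / γ_2. -/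
/-!
Since `Λ` has nonnegative coefficients and degree at most `q ≥ 1`, for `a ≤ ρ ≤ 2a` we get
`Λ(ρ) ≤ (ρ/a)^q Λ(a) ≤ 2^(q-1) (ρ/a) Λ(a)`, hence
`ρ / V(ρ) ≥ ρ / (γ₂ Λ(ρ)) ≥ 2^(1-q) (γ₁/γ₂) a / V(a)` on `[a, 2a]`. Integrating over
`[a, 2a] ⊆ [a, b]` gives the bound with the better constant `2^(1-q) γ₁/γ₂`. Integrability comes
from `V ≥ γ₁ Λ(a) > 0` on `[a, b]`, by monotonicity of `Λ`.
-/

open MeasureTheory Set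

section NonnegCoeff

variable {s : Finset ℕ} {c : ℕ → ℝ}

theorem sum_mul_pow_le_sum_mul_pow (hc : ∀ k ∈ s, 0 ≤ c k) {x y : ℝ} (hx : 0 ≤ x)
    (hxy : x ≤ y) : ∑ k ∈ s, c k * x ^ k ≤ ∑ k ∈ s, c k * y ^ k :=
  Finset.sum_le_sum fun k hk => mul_le_mul_of_nonneg_left (pow_le_pow_left₀ hx hxy k) (hc k hk)

theorem sum_mul_mul_pow_le (hc : ∀ k ∈ s, 0 ≤ c k) {q : ℕ} (hq : ∀ k ∈ s, k ≤ q) {t x : ℝ}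
    (ht : 1 ≤ t) (hx : 0 ≤ x) :
    ∑ k ∈ s, c k * (t * x) ^ k ≤ t ^ q * ∑ k ∈ s, c k * x ^ k := by
  rw [Finset.mul_sum]
  refine Finset.sum_le_sum fun k hk => ?_
  have hck := hc k hk
  calc c k * (t * x) ^ k = t ^ k * (c k * x ^ k) := by ring
    _ ≤ t ^ q * (c k * x ^ k) := by gcongr; exact hq k hk

theorem sum_mul_pow_le_two_pow_pred_mul (hc : ∀ k ∈ s, 0 ≤ c k) {q : ℕ} (hq : ∀ k ∈ s, k ≤ q)
    (hq₁ : 1 ≤ q) {a ρ : ℝ} (ha : 0 < a) (haρ : a ≤ ρ) (hρa : ρ ≤ 2 * a) :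
    ∑ k ∈ s, c k * ρ ^ k ≤ 2 ^ (q - 1) * (ρ / a) * ∑ k ∈ s, c k * a ^ k := by
  have ht : 1 ≤ ρ / a := (one_le_div ha).2 haρ
  have ht₂ : ρ / a ≤ 2 := (div_le_iff₀ ha).2 (by linarith)
  have hΛa : 0 ≤ ∑ k ∈ s, c k * a ^ k :=
    Finset.sum_nonneg fun k hk => mul_nonneg (hc k hk) (pow_nonneg ha.le k)
  calc ∑ k ∈ s, c k * ρ ^ k = ∑ k ∈ s, c k * (ρ / a * a) ^ k := by
        rw [div_mul_cancel₀ ρ ha.ne']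
    _ ≤ (ρ / a) ^ q * ∑ k ∈ s, c k * a ^ k := sum_mul_mul_pow_le hc hq ht ha.le
    _ = (ρ / a) ^ (q - 1) * (ρ / a) * ∑ k ∈ s, c k * a ^ k := by
        rw [← pow_succ, Nat.sub_add_cancel hq₁]
    _ ≤ 2 ^ (q - 1) * (ρ / a) * ∑ k ∈ s, c k * a ^ k := by gcongr

end NonnegCoeff

theorem intervalIntegrable_id_div {V : ℝ → ℝ} {a b m : ℝ} (hV : Measurable V) (ha : 0 ≤ a)
    (hab : a ≤ b) (hm : 0 < m) (hVm : ∀ ρ ∈ Icc a b, m ≤ V ρ) :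
    IntervalIntegrable (fun ρ => ρ / V ρ) volume a b := by
  have hbound : IntegrableOn (fun ρ => ρ / V ρ) (Icc a b) volume := by
    refine Measure.integrableOn_of_bounded (M := b / m) measure_Icc_lt_top.ne
      (measurable_id.div hV).aestronglyMeasurable ?_
    filter_upwards [ae_restrict_mem measurableSet_Icc] with ρ hρ
    have hρ₀ : 0 ≤ ρ := ha.trans hρ.1
    rw [Real.norm_eq_abs, abs_of_nonneg (div_nonneg hρ₀ (hm.le.trans (hVm ρ hρ)))]
    exact div_le_div₀ (hρ₀.trans hρ.2) hρ.2 hm (hVm ρ hρ)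
  exact (intervalIntegrable_iff_integrableOn_Icc_of_le hab).2 hbound

theorem mul_le_intervalIntegral_of_le_on {g : ℝ → ℝ} {a c b m : ℝ} (hac : a ≤ c) (hcb : c ≤ b)
    (hg : IntervalIntegrable g volume a b) (hg₀ : ∀ x ∈ Icc a b, 0 ≤ g x)
    (hm : ∀ x ∈ Icc a c, m ≤ g x) : (c - a) * m ≤ ∫ x in a..b, g x := by
  calc (c - a) * m = ∫ _ in a..c, m := by simp
    _ ≤ ∫ x in a..c, g x :=
      intervalIntegral.integral_mono_on hac intervalIntegrable_const
        (hg.mono_set (by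
          rw [uIcc_of_le hac, uIcc_of_le (hac.trans hcb)]
          exact Icc_subset_Icc_right hcb)) hm
    _ ≤ ∫ x in a..b, g x :=
      intervalIntegral.integral_mono_interval le_rfl hac hcb
        ((ae_restrict_mem measurableSet_Ioc).mono fun x hx => hg₀ x (Ioc_subset_Icc_self hx)) hg

theorem two_rpow_two_mul_one_sub_le {q : ℕ} (hq : 1 ≤ q) :
    (2 : ℝ) ^ (2 * (1 - (q : ℝ))) ≤ ((2 : ℝ) ^ (q - 1))⁻¹ := by
  have hq' : (1 : ℝ) ≤ q := by exact_mod_cast hq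
  rw [← Real.rpow_natCast, ← Real.rpow_neg zero_le_two, Nat.cast_sub hq, Nat.cast_one]
  exact Real.rpow_le_rpow_of_exponent_le one_le_two (by linarith)

theorem div_le_id_div_of_comparable {s : Finset ℕ} {c : ℕ → ℝ} {q : ℕ}
    (hc : ∀ k ∈ s, 0 ≤ c k) (hq : ∀ k ∈ s, k ≤ q) (hq₁ : 1 ≤ q) {V : ℝ → ℝ} {γ₁ γ₂ : ℝ}
    (hγ₁ : 0 < γ₁) (hγ₂ : 0 < γ₂) (hVpos : ∀ ρ, 0 < ρ → 0 < V ρ)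
    (hV : ∀ ρ, 0 < ρ →
      γ₁ * ∑ k ∈ s, c k * ρ ^ k ≤ V ρ ∧ V ρ ≤ γ₂ * ∑ k ∈ s, c k * ρ ^ k)
    {a ρ : ℝ} (ha : 0 < a) (hρ : ρ ∈ Icc a (2 * a)) :
    γ₁ * a / (2 ^ (q - 1) * γ₂ * V a) ≤ ρ / V ρ := by
  have hρ₀ : 0 < ρ := ha.trans_le hρ.1
  have hΛa : 0 < ∑ k ∈ s, c k * a ^ k :=
    pos_of_mul_pos_right ((hVpos a ha).trans_le (hV a ha).2) hγ₂.le
  have hΛρ : 0 < γ₂ * ∑ k ∈ s, c k * ρ ^ k := (hVpos ρ hρ₀).trans_le (hV ρ hρ₀).2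
  calc γ₁ * a / (2 ^ (q - 1) * γ₂ * V a)
      ≤ γ₁ * a / (2 ^ (q - 1) * γ₂ * (γ₁ * ∑ k ∈ s, c k * a ^ k)) := by
        gcongr; exact (hV a ha).1
    _ = ρ / (γ₂ * (2 ^ (q - 1) * (ρ / a) * ∑ k ∈ s, c k * a ^ k)) := by field_simp
    _ ≤ ρ / (γ₂ * ∑ k ∈ s, c k * ρ ^ k) := by
        gcongr; exact sum_mul_pow_le_two_pow_pred_mul hc hq hq₁ ha hρ.1 hρ.2
    _ ≤ ρ / V ρ := div_le_div_of_nonneg_left hρ₀.le (hVpos ρ hρ₀) (hV ρ hρ₀).2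

theorem stmt9_general (n q : ℕ) (hn : 1 ≤ n) (hnq : n ≤ q)
    (f : ℕ → ℝ) (hf : ∀ k, 0 ≤ f k)
    (γ₁ γ₂ : ℝ) (hγ1 : 0 < γ₁) (hγ12 : γ₁ ≤ γ₂)
    (V : ℝ → ℝ) (hVpos : ∀ ρ : ℝ, 0 < ρ → 0 < V ρ) (hVmeas : Measurable V)
    (hV : ∀ ρ : ℝ, 0 < ρ →
      γ₁ * (∑ k ∈ Finset.Icc n q, f k * ρ ^ k) ≤ V ρ ∧
      V ρ ≤ γ₂ * (∑ k ∈ Finset.Icc n q, f k * ρ ^ k))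
    (a b : ℝ) (ha : 0 < a) (hab : a < b / 2) :
    (2 : ℝ) ^ (2 * (1 - (q : ℝ))) * γ₁ / γ₂ * (a ^ 2 / V a)
      ≤ ∫ ρ in a..b, ρ / V ρ := by
  have hf' : ∀ k ∈ Finset.Icc n q, 0 ≤ f k := fun k _ => hf k
  have hq : 1 ≤ q := hn.trans hnq
  have hγ₂ : 0 < γ₂ := hγ1.trans_le hγ12
  have hVa : 0 < V a := hVpos a ha
  have hΛa : 0 < ∑ k ∈ Finset.Icc n q, f k * a ^ k :=
    pos_of_mul_pos_right (hVa.trans_le (hV a ha).2) hγ₂.le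
  have hVlower : ∀ ρ ∈ Icc a b, γ₁ * ∑ k ∈ Finset.Icc n q, f k * a ^ k ≤ V ρ := fun ρ hρ =>
    (mul_le_mul_of_nonneg_left (sum_mul_pow_le_sum_mul_pow hf' ha.le hρ.1) hγ1.le).trans
      (hV ρ (ha.trans_le hρ.1)).1
  calc (2 : ℝ) ^ (2 * (1 - (q : ℝ))) * γ₁ / γ₂ * (a ^ 2 / V a)
      ≤ ((2 : ℝ) ^ (q - 1))⁻¹ * γ₁ / γ₂ * (a ^ 2 / V a) := by
        gcongr; exact two_rpow_two_mul_one_sub_le hq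
    _ = (2 * a - a) * (γ₁ * a / (2 ^ (q - 1) * γ₂ * V a)) := by field_simp; ring
    _ ≤ ∫ ρ in a..b, ρ / V ρ :=
      mul_le_intervalIntegral_of_le_on (by linarith) (by linarith)
        (intervalIntegrable_id_div hVmeas ha.le (by linarith) (by positivity) hVlower)
        (fun ρ hρ => div_nonneg (ha.le.trans hρ.1) (hVpos ρ (ha.trans_le hρ.1)).le)
        (fun ρ hρ => div_le_id_div_of_comparable hf' (fun k hk => (Finset.mem_Icc.1 hk).2) hq
          hγ1 hγ₂ hVpos hV ha hρ)

/-- Proposition 5.3 (abstract form): if `V` is comparable to the polynomial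
`Λ(ρ) = Σ_{k=n}^q f_k ρ^k` with nonnegative coefficients, not all zero, then
`∫_a^b ρ/V(ρ) dρ ≥ C a²/V(a)` for `0 < a < b/2`, with `C = 2^{2(1−q)} γ₁/γ₂`. -/
theorem stmt9 (n q : ℕ) (hn : 1 ≤ n) (hnq : n ≤ q)
    (f : ℕ → ℝ) (hf : ∀ k, 0 ≤ f k) (hfne : ∃ k, n ≤ k ∧ k ≤ q ∧ f k ≠ 0)
    (γ₁ γ₂ : ℝ) (hγ1 : 0 < γ₁) (hγ12 : γ₁ ≤ γ₂)
    (V : ℝ → ℝ) (hVpos : ∀ ρ : ℝ, 0 < ρ → 0 < V ρ) (hVmeas : Measurable V)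
    (hV : ∀ ρ : ℝ, 0 < ρ →
      γ₁ * (∑ k ∈ Finset.Icc n q, f k * ρ ^ k) ≤ V ρ ∧
      V ρ ≤ γ₂ * (∑ k ∈ Finset.Icc n q, f k * ρ ^ k))
    (a b : ℝ) (ha : 0 < a) (hab : a < b / 2) :
    (2 : ℝ) ^ (2 * (1 - (q : ℝ))) * γ₁ / γ₂ * (a ^ 2 / V a)
      ≤ ∫ ρ in a..b, ρ / V ρ :=
  stmt9_general n q hn hnq f hf γ₁ γ₂ hγ1 hγ12 V hVpos hVmeas hV a b ha hab
end

section
/- Let (X, d) be a metric space and μ a Borel measure on X such that 0 < μ(B(z, s)) < ∞ for every z ∈ X and s > 0, and such that the doubling inequality μ(B(z, 2s)) ≤ C_d μ(B(z, s)) holds for every z ∈ X and s > 0, where C_d ≥ 1 and B(z, s) denotes the open ball of center z and radius s. Then for every p > 0, every x ∈ X and every r > 0 one has ∫_{B(x,r)} d(x,y)^p / μ(B(x, d(x,y))) dμ(y) ≤ C_d · (2^p / (2^p − 1)) · r^p, where the integrand is understood to be 0 at points y with d(x,y) = 0. -/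
open MeasureTheory

/-- Lemma 7.6 (abstract form): in a metric space with a doubling Borel measure whose
balls have finite positive measure, for every `p > 0` one has
`∫_{B(x,r)} d(x,y)^p / μ(B(x, d(x,y))) dμ(y) ≤ C_d 2^p/(2^p − 1) r^p`. -/
theorem stmt12 {X : Type*} [MetricSpace X] [MeasurableSpace X] [BorelSpace X]
    (μ : Measure X)
    (hpos : ∀ (z : X) (s : ℝ), 0 < s → 0 < μ (Metric.ball z s))
    (hfin : ∀ (z : X) (s : ℝ), 0 < s → μ (Metric.ball z s) < ⊤)
    (Cd : ℝ) (hCd : 1 ≤ Cd)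
    (hdouble : ∀ (z : X) (s : ℝ), 0 < s →
      μ (Metric.ball z (2 * s)) ≤ ENNReal.ofReal Cd * μ (Metric.ball z s))
    (p : ℝ) (hp : 0 < p) (x : X) (r : ℝ) (hr : 0 < r) :
    ∫ y in Metric.ball x r,
        (if dist x y = 0 then 0
          else dist x y ^ p / (μ (Metric.ball x (dist x y))).toReal) ∂μ
      ≤ Cd * ((2 : ℝ) ^ p / ((2 : ℝ) ^ p - 1)) * r ^ p := by
  have hq1 : (1:ℝ) < (2:ℝ) ^ p := (Real.one_lt_rpow_iff_of_pos (by norm_num)).2 (Or.inl ⟨by norm_num, hp⟩)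
  have hq0 : (0:ℝ) < (2:ℝ) ^ p := lt_trans one_pos hq1
  have hqs : (0:ℝ) < (2:ℝ) ^ p - 1 := by linarith
  have hCd0 : (0:ℝ) < Cd := lt_of_lt_of_le one_pos hCd
  have hRHSpos : 0 ≤ Cd * ((2 : ℝ) ^ p / ((2 : ℝ) ^ p - 1)) * r ^ p := by positivity
  set f : X → ℝ := fun y => if dist x y = 0 then 0
      else dist x y ^ p / (μ (Metric.ball x (dist x y))).toReal with hf
  have hfnn : ∀ y, 0 ≤ f y := by
    intro y
    simp only [hf]
    split
    · exact le_refl 0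
    · exact div_nonneg (Real.rpow_nonneg dist_nonneg p) ENNReal.toReal_nonneg
  -- measurability
  have hdm : Measurable fun y : X => dist x y := (continuous_const.dist continuous_id).measurable
  have hmono : Monotone fun t : ℝ => μ (Metric.ball x t) :=
    fun a b hab => measure_mono (Metric.ball_subset_ball hab)
  have hfm : Measurable f := by
    apply Measurable.ite (hdm (measurableSet_singleton (0:ℝ))) measurable_const
    exact ((Real.continuous_rpow_const hp.le).measurable.comp hdm).div (ENNReal.measurable_toReal.comp (hmono.measurable.comp hdm))
  -- the annuli
  set R : ℕ → ℝ := fun k => r / 2 ^ k with hR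
  have hRpos : ∀ k, 0 < R k := fun k => div_pos hr (by positivity)
  have hRsucc : ∀ k, 2 * R (k + 1) = R k := by
    intro k
    simp only [hR]
    field_simp
    ring
  set A : ℕ → Set X := fun k => Metric.ball x (R k) \ Metric.ball x (R (k + 1)) with hA
  -- covering
  have hcover : Metric.ball x r \ {x} ⊆ ⋃ k, A k := by
    intro y hy
    obtain ⟨hyball, hyx⟩ := hy
    have hd0 : 0 < dist x y := by
      rw [dist_pos]
      exact fun h => hyx (h ▸ rfl)
    have hdr : dist x y < r := by rwa [Metric.mem_ball, dist_comm] at hyball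
    have hex : ∃ n, R n ≤ dist x y := by
      obtain ⟨n, hn⟩ := pow_unbounded_of_one_lt (r / dist x y) (by norm_num : (1:ℝ) < 2)
      refine ⟨n, ?_⟩
      show r / 2 ^ n ≤ dist x y
      rw [div_le_iff₀ (by positivity : (0:ℝ) < 2 ^ n)]
      have h := (div_lt_iff₀ hd0).1 hn
      nlinarith
    classical
    let n₀ := Nat.find hex
    have hn₀ : R n₀ ≤ dist x y := Nat.find_spec hex
    have hR0 : ¬ R 0 ≤ dist x y := not_le.2 (by simpa [hR] using hdr)
    have hn₀pos : 0 < n₀ := Nat.pos_of_ne_zero fun h => hR0 (h ▸ hn₀)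
    refine Set.mem_iUnion.2 ⟨n₀ - 1, ?_, ?_⟩
    · rw [Metric.mem_ball, dist_comm]
      have := Nat.find_min hex (Nat.sub_lt hn₀pos one_pos)
      push_neg at this
      exact this
    · intro hmem
      rw [Metric.mem_ball, dist_comm] at hmem
      rw [Nat.sub_add_cancel hn₀pos] at hmem
      exact absurd hn₀ (not_le.2 hmem)
  -- the lintegral bound
  set g : X → ENNReal := fun y => ENNReal.ofReal (f y) with hg
  have hgx : g x = 0 := by simp [hg, hf]
  -- per-annulus bound
  have hann : ∀ k, ∫⁻ y in A k, g y ∂μ ≤ ENNReal.ofReal Cd * ENNReal.ofReal (R k ^ p) := by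
    intro k
    have hAk : MeasurableSet (A k) := Metric.isOpen_ball.measurableSet.diff
      Metric.isOpen_ball.measurableSet
    set c : ENNReal := ENNReal.ofReal (R k ^ p) / μ (Metric.ball x (R (k+1))) with hc
    have hptwise : ∀ y ∈ A k, g y ≤ c := by
      intro y hy
      obtain ⟨hy1, hy2⟩ := hy
      rw [Metric.mem_ball, dist_comm] at hy1
      rw [Metric.mem_ball, dist_comm, not_lt] at hy2
      have hd0 : 0 < dist x y := lt_of_lt_of_le (hRpos (k+1)) hy2
      have hmpos : 0 < μ (Metric.ball x (dist x y)) := hpos x _ hd0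
      have hmfin : μ (Metric.ball x (dist x y)) ≠ ⊤ := (hfin x _ hd0).ne
      have hmtr : 0 < (μ (Metric.ball x (dist x y))).toReal :=
        ENNReal.toReal_pos hmpos.ne' hmfin
      have : g y = ENNReal.ofReal (dist x y ^ p) / μ (Metric.ball x (dist x y)) := by
        simp only [hg, hf, if_neg hd0.ne']
        rw [ENNReal.ofReal_div_of_pos hmtr, ENNReal.ofReal_toReal hmfin]
      rw [this, hc]
      apply ENNReal.div_le_div
      · exact ENNReal.ofReal_le_ofReal
          (Real.rpow_le_rpow dist_nonneg hy1.le hp.le)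
      · exact measure_mono (Metric.ball_subset_ball hy2)
    calc ∫⁻ y in A k, g y ∂μ ≤ ∫⁻ _ in A k, c ∂μ := setLIntegral_mono' hAk hptwise
      _ = c * μ (A k) := by rw [setLIntegral_const]
      _ ≤ c * μ (Metric.ball x (R k)) :=
        mul_le_mul_right (measure_mono Set.diff_subset) c
      _ ≤ c * (ENNReal.ofReal Cd * μ (Metric.ball x (R (k+1)))) := by
        apply mul_le_mul_right
        have := hdouble x (R (k+1)) (hRpos (k+1))
        rwa [hRsucc k] at this
      _ = ENNReal.ofReal Cd * (c * μ (Metric.ball x (R (k+1)))) := by ring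
      _ = ENNReal.ofReal Cd * ENNReal.ofReal (R k ^ p) := by
        rw [hc, ENNReal.div_mul_cancel (hpos x _ (hRpos (k+1))).ne' (hfin x _ (hRpos (k+1))).ne]
  -- geometry of R k ^ p
  have hRk : ∀ k, ENNReal.ofReal (R k ^ p) =
      ENNReal.ofReal (r ^ p) * (ENNReal.ofReal (((2:ℝ) ^ p)⁻¹)) ^ k := by
    intro k
    have h2k : (0:ℝ) < 2 ^ k := by positivity
    have hpow : ((2:ℝ) ^ k) ^ p = ((2:ℝ) ^ p) ^ k := by
      rw [← Real.rpow_natCast (2:ℝ) k, ← Real.rpow_natCast ((2:ℝ)^p) k,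
        ← Real.rpow_mul (by norm_num), ← Real.rpow_mul (by norm_num), mul_comm]
    rw [hR]
    simp only
    rw [Real.div_rpow hr.le h2k.le, hpow, div_eq_mul_inv, ← inv_pow,
      ENNReal.ofReal_mul (Real.rpow_nonneg hr.le p), ENNReal.ofReal_pow (by positivity)]
  -- geometric series
  have hsum : ∑' k : ℕ, (ENNReal.ofReal (((2:ℝ) ^ p)⁻¹)) ^ k =
      ENNReal.ofReal ((2:ℝ) ^ p / ((2:ℝ) ^ p - 1)) := by
    rw [ENNReal.tsum_geometric]
    have h1 : (1:ENNReal) - ENNReal.ofReal (((2:ℝ) ^ p)⁻¹) =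
        ENNReal.ofReal (1 - ((2:ℝ) ^ p)⁻¹) := by
      rw [ENNReal.ofReal_sub _ (by positivity), ENNReal.ofReal_one]
    rw [h1, ← ENNReal.ofReal_inv_of_pos (by rw [sub_pos, inv_lt_one_iff₀]; right; exact hq1)]
    congr 1
    field_simp
  -- main lintegral bound
  have key : ∫⁻ y in Metric.ball x r, g y ∂μ ≤
      ENNReal.ofReal (Cd * ((2 : ℝ) ^ p / ((2 : ℝ) ^ p - 1)) * r ^ p) := by
    have hsub : Metric.ball x r ⊆ (Metric.ball x r \ {x}) ∪ {x} := by
      intro y hy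
      by_cases h : y = x
      · exact Or.inr h
      · exact Or.inl ⟨hy, h⟩
    calc ∫⁻ y in Metric.ball x r, g y ∂μ
        ≤ ∫⁻ y in (Metric.ball x r \ {x}) ∪ {x}, g y ∂μ :=
          lintegral_mono' (Measure.restrict_mono hsub le_rfl) le_rfl
      _ ≤ ∫⁻ y in Metric.ball x r \ {x}, g y ∂μ + ∫⁻ y in {x}, g y ∂μ :=
          lintegral_union_le _ _ _
      _ = ∫⁻ y in Metric.ball x r \ {x}, g y ∂μ := by
          rw [lintegral_singleton, hgx, zero_mul, add_zero]
      _ ≤ ∫⁻ y in ⋃ k, A k, g y ∂μ :=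
          lintegral_mono' (Measure.restrict_mono hcover le_rfl) le_rfl
      _ ≤ ∑' k, ∫⁻ y in A k, g y ∂μ := lintegral_iUnion_le _ _
      _ ≤ ∑' k, ENNReal.ofReal Cd * ENNReal.ofReal (R k ^ p) := ENNReal.tsum_le_tsum hann
      _ = ENNReal.ofReal Cd * (ENNReal.ofReal (r ^ p) *
            ∑' k : ℕ, (ENNReal.ofReal (((2:ℝ) ^ p)⁻¹)) ^ k) := by
          rw [ENNReal.tsum_mul_left]
          congr 1
          rw [← ENNReal.tsum_mul_left]
          exact tsum_congr hRk
      _ = ENNReal.ofReal (Cd * ((2 : ℝ) ^ p / ((2 : ℝ) ^ p - 1)) * r ^ p) := by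
          rw [hsum, ENNReal.ofReal_mul (by positivity), ENNReal.ofReal_mul hCd0.le]
          ring
  -- conclude
  have heq : ∫ y in Metric.ball x r, f y ∂μ =
      (∫⁻ y in Metric.ball x r, g y ∂μ).toReal := by
    rw [integral_eq_lintegral_of_nonneg_ae (Filter.Eventually.of_forall hfnn)
      hfm.aestronglyMeasurable]
  rw [show (fun y => if dist x y = 0 then (0:ℝ)
      else dist x y ^ p / (μ (Metric.ball x (dist x y))).toReal) = f from rfl] at *
  calc ∫ y in Metric.ball x r, f y ∂μ
      = (∫⁻ y in Metric.ball x r, g y ∂μ).toReal := heq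
    _ ≤ Cd * ((2 : ℝ) ^ p / ((2 : ℝ) ^ p - 1)) * r ^ p :=
        ENNReal.toReal_le_of_le_ofReal hRHSpos key
end

section
/- Let m ≥ 1, let X_1, …, X_m : ℝⁿ → ℝⁿ be continuous maps, let f : ℝⁿ → ℝ be continuously differentiable, and define |Xf|(z) := sqrt(Σ_{i=1}^m (Df(z)[X_i(z)])²), where Df(z) is the Fréchet derivative of f at z. Let r > 0, let a_1, …, a_m : [0,1] → ℝ satisfy |a_i(t)| ≤ r for all t and i, and let γ : [0,1] → ℝⁿ be a Lipschitz curve such that for almost every t ∈ [0,1] the derivative γ′(t) exists and equals Σ_{i=1}^m a_i(t) X_i(γ(t)). If M ≥ 0 is such that |Xf|(γ(t)) ≤ M for every t ∈ [0,1], then |f(γ(1)) − f(γ(0))| ≤ √m · r · M. -/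
/-! Along `γ` the function `f ∘ γ` is Lipschitz, hence absolutely continuous, so
`f (γ 1) - f (γ 0)` is the integral of its derivative over `[0, 1]`. At almost every `t` the chain
rule gives `(f ∘ γ)' t = ∑ i, a i t * (X i f) (γ t)`, which Cauchy–Schwarz bounds by
`√m * r * |Xf| (γ t) ≤ √m * r * M`. -/

open MeasureTheory Set
open scoped Interval

theorem AbsolutelyContinuousOnInterval.abs_sub_le_of_ae_abs_deriv_le {f : ℝ → ℝ} {a b C : ℝ}
    (hf : AbsolutelyContinuousOnInterval f a b) (h : ∀ᵐ x, x ∈ Ι a b → |deriv f x| ≤ C) :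
    |f b - f a| ≤ C * |b - a| := by
  rw [← hf.integral_deriv_eq_sub]
  simpa only [Real.norm_eq_abs] using intervalIntegral.norm_integral_le_of_norm_le_const_ae
    (f := deriv f) (a := a) (b := b) (by simpa only [Real.norm_eq_abs])

theorem ContDiff.exists_lipschitzOnWith_comp {X E F : Type*} [PseudoMetricSpace X]
    [NormedAddCommGroup E] [NormedSpace ℝ E] [NormedAddCommGroup F] [NormedSpace ℝ F]
    {f : E → F} (hf : ContDiff ℝ 1 f) {γ : X → E} {s : Set X} {L : NNReal}
    (hs : IsCompact s) (hγ : LipschitzOnWith L γ s) :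
    ∃ K, LipschitzOnWith K (f ∘ γ) s := by
  obtain ⟨K, hK⟩ := hf.locallyLipschitz.locallyLipschitzOn.exists_lipschitzOnWith_of_compact
    (hs.image_of_continuousOn hγ.continuousOn)
  exact ⟨K * L, hK.comp hγ (mapsTo_image γ s)⟩

theorem abs_sum_mul_le_sqrt_card_mul_mul_sqrt_sum_sq {ι : Type*} [Fintype ι] {a : ι → ℝ} {r : ℝ}
    (hr : 0 ≤ r) (ha : ∀ i, |a i| ≤ r) (b : ι → ℝ) :
    |∑ i, a i * b i| ≤ √(Fintype.card ι) * r * √(∑ i, b i ^ 2) := by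
  have hsq : ∑ i, a i ^ 2 ≤ Fintype.card ι * r ^ 2 := by
    calc ∑ i, a i ^ 2 ≤ ∑ _i : ι, r ^ 2 := by
          refine Finset.sum_le_sum fun i _ => ?_
          exact sq_le_sq' (abs_le.1 (ha i)).1 (abs_le.1 (ha i)).2
      _ = Fintype.card ι * r ^ 2 := by simp
  calc |∑ i, a i * b i| ≤ √(∑ i, a i ^ 2) * √(∑ i, b i ^ 2) := by
        rw [← Real.sqrt_sq_eq_abs, ← Real.sqrt_mul (by positivity)]
        exact Real.sqrt_le_sqrt (Finset.sum_mul_sq_le_sq_mul_sq _ a b)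
    _ ≤ √(Fintype.card ι * r ^ 2) * √(∑ i, b i ^ 2) := by gcongr
    _ = √(Fintype.card ι) * r * √(∑ i, b i ^ 2) := by
        rw [Real.sqrt_mul (Nat.cast_nonneg _), Real.sqrt_sq hr]

theorem HasFDerivAt.comp_hasDerivAt_sum_smul {ι E : Type*} [Fintype ι] [NormedAddCommGroup E]
    [NormedSpace ℝ E] {f : E → ℝ} {f' : E →L[ℝ] ℝ} {γ : ℝ → E} {t : ℝ} {c : ι → ℝ} {v : ι → E}
    (hf : HasFDerivAt f f' (γ t)) (hγ : HasDerivAt γ (∑ i, c i • v i) t) :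
    HasDerivAt (f ∘ γ) (∑ i, c i * f' (v i)) t := by
  simpa only [map_sum, map_smul, smul_eq_mul] using hf.comp_hasDerivAt t hγ

theorem stmt13_general (n m : ℕ)
    (X : Fin m → (Fin n → ℝ) → (Fin n → ℝ))
    (f : (Fin n → ℝ) → ℝ) (hf : ContDiff ℝ 1 f)
    (r : ℝ) (hr : 0 < r)
    (a : Fin m → ℝ → ℝ) (ha : ∀ i t, |a i t| ≤ r)
    (γ : ℝ → (Fin n → ℝ)) (L : NNReal) (hγ : LipschitzOnWith L γ (Set.Icc 0 1))
    (hderiv : ∀ᵐ t ∂(volume.restrict (Set.Icc (0 : ℝ) 1)),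
      HasDerivAt γ (∑ i, a i t • X i (γ t)) t)
    (M : ℝ)
    (hM : ∀ t ∈ Set.Icc (0 : ℝ) 1,
      Real.sqrt (∑ i, (fderiv ℝ f (γ t) (X i (γ t))) ^ 2) ≤ M) :
    |f (γ 1) - f (γ 0)| ≤ Real.sqrt m * r * M := by
  obtain ⟨K, hK⟩ := hf.exists_lipschitzOnWith_comp isCompact_Icc hγ
  have hac : AbsolutelyContinuousOnInterval (f ∘ γ) 0 1 :=
    (uIcc_of_le (zero_le_one' ℝ) ▸ hK).absolutelyContinuousOnInterval
  have hbound : ∀ᵐ t, t ∈ Ι (0 : ℝ) 1 → |deriv (f ∘ γ) t| ≤ √m * r * M := by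
    filter_upwards [(ae_restrict_iff' measurableSet_Icc).1 hderiv] with t hγt ht
    have htIcc : t ∈ Icc (0 : ℝ) 1 := Ioc_subset_Icc_self (uIoc_of_le (zero_le_one' ℝ) ▸ ht)
    rw [((hf.differentiable one_ne_zero _).hasFDerivAt.comp_hasDerivAt_sum_smul
      (hγt htIcc)).deriv]
    calc _ ≤ √m * r * √(∑ i, (fderiv ℝ f (γ t) (X i (γ t))) ^ 2) := by
          simpa using abs_sum_mul_le_sqrt_card_mul_mul_sqrt_sum_sq hr.le (ha · t) _
      _ ≤ √m * r * M := by gcongr; exact hM t htIcc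
  simpa using hac.abs_sub_le_of_ae_abs_deriv_le hbound

/-- Theorem 8.3 ("Lagrange Theorem"): if `γ` is a Lipschitz curve that is admissible
(sub-unit of speed `r`) for the vector fields `X_1, …, X_m`, and the horizontal
gradient length `|Xf|` is bounded by `M` along `γ`, then
`|f(γ(1)) − f(γ(0))| ≤ √m · r · M`. -/
theorem stmt13 (n m : ℕ) (hm : 1 ≤ m)
    (X : Fin m → (Fin n → ℝ) → (Fin n → ℝ)) (hX : ∀ i, Continuous (X i))
    (f : (Fin n → ℝ) → ℝ) (hf : ContDiff ℝ 1 f)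
    (r : ℝ) (hr : 0 < r)
    (a : Fin m → ℝ → ℝ) (ha : ∀ i t, |a i t| ≤ r)
    (γ : ℝ → (Fin n → ℝ)) (L : NNReal) (hγ : LipschitzOnWith L γ (Set.Icc 0 1))
    (hderiv : ∀ᵐ t ∂(volume.restrict (Set.Icc (0 : ℝ) 1)),
      HasDerivAt γ (∑ i, a i t • X i (γ t)) t)
    (M : ℝ) (hM0 : 0 ≤ M)
    (hM : ∀ t ∈ Set.Icc (0 : ℝ) 1,
      Real.sqrt (∑ i, (fderiv ℝ f (γ t) (X i (γ t))) ^ 2) ≤ M) :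
    |f (γ 1) - f (γ 0)| ≤ Real.sqrt m * r * M :=
  stmt13_general n m X f hf r hr a ha γ L hγ hderiv M hM
end

section
/- Let K(m) = ∫_0^{π/2} (1 − m sin²θ)^{−1/2} dθ for m < 1 denote the complete elliptic integral of the first kind. Then lim_{m → 1⁻} K(m) / (−(1/2) log(1 − m)) = 1; that is, K(m) is asymptotically equivalent to −(1/2) log(1 − m) as m tends to 1 from the left. -/
/-!
Write `m = k²` with `0 ≤ k < 1`. The elementary integral
`∫₀^{π/2} k sin θ / √(1 - k² sin² θ) dθ` equals `artanh k` (an antiderivative is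
`-arsinh (k cos θ / √(1 - k²))`), and the integrand of `K(k²)` exceeds it by
`(1 - k sin θ) / √(1 - k² sin² θ) ∈ [0, 1]`. Hence `artanh k ≤ K(k²) ≤ artanh k + π / 2`,
while `artanh k = -½ log (1 - k²) + log (1 + k)`: so `K(m)` differs from `-½ log (1 - m)` by a
bounded amount, and the latter tends to `∞`.
-/

open MeasureTheory Filter Real Set Topology Asymptotics intervalIntegral

noncomputable def ellipticK (m : ℝ) : ℝ :=
  ∫ θ in (0 : ℝ)..π / 2, (1 - m * sin θ ^ 2) ^ (-(1 : ℝ) / 2)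

lemma one_sub_le_sqrt_one_sub_sq {t : ℝ} (h0 : 0 ≤ t) (h1 : t ≤ 1) : 1 - t ≤ √(1 - t ^ 2) :=
  le_sqrt_of_sq_le (by nlinarith)

lemma inv_sqrt_one_sub_sq_le {t : ℝ} (h0 : 0 ≤ t) (h1 : t ≤ 1) :
    (√(1 - t ^ 2))⁻¹ ≤ t * (√(1 - t ^ 2))⁻¹ + 1 := by
  rcases (sqrt_nonneg (1 - t ^ 2)).eq_or_lt with h | h
  · simp [← h]
  · rw [← sub_le_iff_le_add', ← one_sub_mul, ← div_eq_mul_inv, div_le_one h]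
    exact one_sub_le_sqrt_one_sub_sq h0 h1

theorem tendsto_div_of_sub_isBigO_one {α : Type*} {l : Filter α} {f g : α → ℝ}
    (hg : Tendsto g l atTop) (hfg : (f - g) =O[l] fun _ => (1 : ℝ)) :
    Tendsto (f / g) l (𝓝 1) :=
  (isEquivalent_iff_tendsto_one (hg.eventually_ne_atTop 0)).1 <|
    hfg.trans_isLittleO ((isLittleO_one_left_iff ℝ).2 (tendsto_norm_atTop_atTop.comp hg))

theorem tendsto_neg_half_log_one_sub_nhdsLT_one :
    Tendsto (fun m : ℝ => -(1 / 2) * log (1 - m)) (𝓝[<] 1) atTop := by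
  refine (tendsto_log_nhdsGT_zero.comp ?_).const_mul_atBot_of_neg (by norm_num)
  have hmaps : MapsTo (fun m : ℝ => 1 - m) (Iio 1) (Ioi 0) :=
    fun m (hm : m < 1) => show 0 < 1 - m from sub_pos.2 hm
  simpa using (continuous_sub_left (1 : ℝ)).continuousWithinAt.tendsto_nhdsWithin (x := 1) hmaps

section Modulus

variable {k : ℝ}

lemma one_sub_sq_mul_sin_sq_pos (hk : k ∈ Ioo (-1) 1) (θ : ℝ) : 0 < 1 - k ^ 2 * sin θ ^ 2 := by
  have : k ^ 2 < 1 := by nlinarith [hk.1, hk.2]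
  nlinarith [sin_sq_le_one θ, sq_nonneg (sin θ)]

lemma continuous_inv_sqrt_one_sub_sq_mul_sin_sq (hk : k ∈ Ioo (-1) 1) :
    Continuous fun θ => (√(1 - k ^ 2 * sin θ ^ 2))⁻¹ :=
  (by fun_prop : Continuous fun θ => √(1 - k ^ 2 * sin θ ^ 2)).inv₀
    fun θ => (sqrt_pos.2 (one_sub_sq_mul_sin_sq_pos hk θ)).ne'

lemma continuous_mul_sin_mul_inv_sqrt (hk : k ∈ Ioo (-1) 1) :
    Continuous fun θ => k * sin θ * (√(1 - k ^ 2 * sin θ ^ 2))⁻¹ :=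
  (continuous_const.mul continuous_sin).mul (continuous_inv_sqrt_one_sub_sq_mul_sin_sq hk)

lemma ellipticK_sq_eq_integral_inv_sqrt (hk : k ∈ Ioo (-1) 1) :
    ellipticK (k ^ 2) = ∫ θ in (0 : ℝ)..π / 2, (√(1 - k ^ 2 * sin θ ^ 2))⁻¹ := by
  refine integral_congr fun θ _ => ?_
  rw [neg_div, rpow_neg (one_sub_sq_mul_sin_sq_pos hk θ).le, sqrt_eq_rpow]

lemma hasDerivAt_neg_arsinh_mul_cos (hk : k ∈ Ioo (-1) 1) (θ : ℝ) :
    HasDerivAt (fun θ => -arsinh (k * cos θ / √(1 - k ^ 2)))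
      (k * sin θ * (√(1 - k ^ 2 * sin θ ^ 2))⁻¹) θ := by
  have hs : 0 < 1 - k ^ 2 := by nlinarith [hk.1, hk.2]
  have hsqrt : √(1 + (k * cos θ / √(1 - k ^ 2)) ^ 2) =
      √(1 - k ^ 2 * sin θ ^ 2) / √(1 - k ^ 2) := by
    rw [← sqrt_div' _ hs.le, div_pow, sq_sqrt hs.le]
    congr 1
    field_simp
    linear_combination k ^ 2 * sin_sq_add_cos_sq θ
  refine (((hasDerivAt_cos θ).const_mul k).div_const (√(1 - k ^ 2))).arsinh.neg.congr_deriv ?_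
  rw [hsqrt, smul_eq_mul]
  have := sqrt_pos.2 hs
  have := sqrt_pos.2 (one_sub_sq_mul_sin_sq_pos hk θ)
  field_simp

theorem arsinh_div_sqrt_one_sub_sq (hk : k ∈ Ioo (-1) 1) :
    arsinh (k / √(1 - k ^ 2)) = artanh k := by
  rw [← sinh_artanh hk, arsinh_sinh]

theorem integral_mul_sin_mul_inv_sqrt (hk : k ∈ Ioo (-1) 1) :
    ∫ θ in (0 : ℝ)..π / 2, k * sin θ * (√(1 - k ^ 2 * sin θ ^ 2))⁻¹ = artanh k := by
  rw [integral_eq_sub_of_hasDerivAt (fun θ _ => hasDerivAt_neg_arsinh_mul_cos hk θ)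
    ((continuous_mul_sin_mul_inv_sqrt hk).intervalIntegrable _ _)]
  simp [arsinh_div_sqrt_one_sub_sq hk]

theorem artanh_le_ellipticK_sq (hk : k ∈ Ioo (-1) 1) : artanh k ≤ ellipticK (k ^ 2) := by
  have hinv := continuous_inv_sqrt_one_sub_sq_mul_sin_sq hk
  rw [← integral_mul_sin_mul_inv_sqrt hk, ellipticK_sq_eq_integral_inv_sqrt hk]
  refine integral_mono_on (by positivity)
    ((continuous_mul_sin_mul_inv_sqrt hk).intervalIntegrable _ _)
    (hinv.intervalIntegrable _ _) fun θ _ => ?_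
  have : k * sin θ ≤ 1 := by nlinarith [sin_le_one θ, neg_one_le_sin θ, hk.1, hk.2]
  exact mul_le_of_le_one_left (inv_nonneg.2 (sqrt_nonneg _)) this

theorem ellipticK_sq_le (hk : k ∈ Ico 0 1) : ellipticK (k ^ 2) ≤ artanh k + π / 2 := by
  have hk' : k ∈ Ioo (-1) 1 := ⟨by linarith [hk.1], hk.2⟩
  have hinv := continuous_inv_sqrt_one_sub_sq_mul_sin_sq hk'
  have hint := (continuous_mul_sin_mul_inv_sqrt hk').intervalIntegrable (μ := volume) 0 (π / 2)
  calc ellipticK (k ^ 2) = ∫ θ in (0 : ℝ)..π / 2, (√(1 - k ^ 2 * sin θ ^ 2))⁻¹ :=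
        ellipticK_sq_eq_integral_inv_sqrt hk'
    _ ≤ ∫ θ in (0 : ℝ)..π / 2, (k * sin θ * (√(1 - k ^ 2 * sin θ ^ 2))⁻¹ + 1) :=
        integral_mono_on (by positivity) (hinv.intervalIntegrable _ _)
          (hint.add intervalIntegrable_const) fun θ hθ => ?_
    _ = artanh k + π / 2 := by
        rw [integral_add hint intervalIntegrable_const, integral_mul_sin_mul_inv_sqrt hk']
        simp
  have hsin : 0 ≤ sin θ := sin_nonneg_of_nonneg_of_le_pi hθ.1 (by linarith [hθ.2, pi_pos])
  have h := inv_sqrt_one_sub_sq_le (mul_nonneg hk.1 hsin)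
    (mul_le_one₀ hk.2.le hsin (sin_le_one θ))
  rwa [mul_pow] at h

theorem artanh_add_half_log_one_sub_sq (hk : k ∈ Ioo (-1) 1) :
    artanh k + 1 / 2 * log (1 - k ^ 2) = log (1 + k) := by
  have h1 : 0 < 1 + k := by linarith [hk.1]
  have h2 : 0 < 1 - k := by linarith [hk.2]
  rw [artanh_eq_half_log (Ioo_subset_Icc_self hk), log_div h1.ne' h2.ne',
    show 1 - k ^ 2 = (1 + k) * (1 - k) by ring, log_mul h1.ne' h2.ne']
  ring

end Modulus

theorem ellipticK_sub_neg_half_log_mem_Icc {m : ℝ} (hm : m ∈ Ico 0 1) :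
    ellipticK m - -(1 / 2) * log (1 - m) ∈ Icc 0 (log 2 + π / 2) := by
  obtain ⟨k, hk0, rfl⟩ : ∃ k, 0 ≤ k ∧ k ^ 2 = m := ⟨√m, sqrt_nonneg m, sq_sqrt hm.1⟩
  have hk1 : k < 1 := by nlinarith [hm.2]
  have hk : k ∈ Ioo (-1) 1 := ⟨by linarith, hk1⟩
  have hlog := artanh_add_half_log_one_sub_sq hk
  have hlow := artanh_le_ellipticK_sq hk
  have hup := ellipticK_sq_le ⟨hk0, hk1⟩
  have : log (1 + k) ≤ log 2 := log_le_log (by linarith) (by linarith)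
  have : 0 ≤ log (1 + k) := log_nonneg (by linarith)
  constructor <;> linarith

/-- Remark 6.9: the complete elliptic integral of the first kind satisfies
`K(m) ∼ −(1/2) log(1 − m)` as `m → 1⁻`. -/
theorem stmt14 :
    Tendsto (fun m : ℝ =>
        (∫ θ in (0 : ℝ)..(Real.pi / 2),
            (1 - m * Real.sin θ ^ 2) ^ (-(1 : ℝ) / 2)) /
          (-(1 / 2) * Real.log (1 - m)))
      (nhdsWithin 1 (Set.Iio 1)) (nhds 1) := by
  refine tendsto_div_of_sub_isBigO_one (f := ellipticK)
    tendsto_neg_half_log_one_sub_nhdsLT_one (IsBigO.of_bound (log 2 + π / 2) ?_)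
  filter_upwards [Ioo_mem_nhdsLT zero_lt_one] with m hm
  obtain ⟨h0, h1⟩ := ellipticK_sub_neg_half_log_mem_Icc ⟨hm.1.le, hm.2⟩
  rwa [Pi.sub_apply, norm_one, mul_one, Real.norm_of_nonneg h0]
end
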